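/- Fix q₀ ∈ (0, π/2) and c₀ ∈ (0, q₀/2]. Let Γ be a circuit with 0 ∈ INT(Γ) and set R = sup{ ‖z‖ : z ∈ Γ }. If θ_RG^MAX(Γ) ≤ 2c₀, then RG(Γ) ≠ ∅ and MPRG(Γ) ≤ R·csc(q₀/2)·θ_RG^MAX(Γ). -/

import Mathlib

/-!
Fix a vertex `x` of `Γ` and let `P`, `Q` be the first regeneration sites met counterclockwise
and clockwise from `x`, at angular distances `δ₁`, `δ₂`. The open sector from `Q` to `P` contains
no site, so `δ₁ + δ₂ ≤ θ := θ_RG^MAX ≤ 2 c₀`. If `δ₁ ≤ c₀`, then `x ∈ W_{P,c₀}`, so `x` lies in the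
forward or backward cone at `P`, and the aperture of that cone bounds the chord:
`|x - P| ≤ R δ₁ / sin q₀`.
Otherwise `δ₂ < θ / 2 ≤ c₀`, and the point `z` where `Γ` crosses the bisector of the gap lies
within angle `θ / 2` of both `P` and `Q`. The cone conditions at `Q` (for `x` and `z`) and at `P`
(for `z`) bound `|‖x‖ - ‖P‖|` by `R θ cot (q₀ / 2)`, and the law of cosines, with the angle
between `x` and `P` at most `θ`, gives `|x - P| ≤ R θ / sin (q₀ / 2)`.
-/

open MeasureTheory Set Metric Filter
open scoped Classical ENNReal Topology Pointwise RealInnerProductSpace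

noncomputable section

/-! ## The plane and the lattice -/

abbrev Z2 := ℤ × ℤ
abbrev E2 := EuclideanSpace ℝ (Fin 2)

/-- the point of `ℝ²` with the given coordinates -/
def mk2 (a b : ℝ) : E2 := (WithLp.equiv 2 (Fin 2 → ℝ)).symm ![a, b]

/-- the embedding of the lattice `ℤ²` into the Euclidean plane -/
def toE2 (v : Z2) : E2 := mk2 v.1 v.2

/-- coordinatewise integer part -/
def fl (x : E2) : Z2 := (⌊x 0⌋, ⌊x 1⌋)

/-- nearest-neighbour adjacency on `ℤ²` -/
def Adj (a b : Z2) : Prop := (a.1 - b.1).natAbs + (a.2 - b.2).natAbs = 1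

instance (a b : Z2) : Decidable (Adj a b) := by unfold Adj; infer_instance

/-- strict lexicographic order on `ℤ²` (used to orient edges) -/
def lexLt (a b : Z2) : Prop := a.1 < b.1 ∨ (a.1 = b.1 ∧ a.2 < b.2)

instance (a b : Z2) : Decidable (lexLt a b) := by unfold lexLt; infer_instance

/-- weak lexicographic order on `ℤ²` -/
def lexLe (a b : Z2) : Prop := a.1 < b.1 ∨ (a.1 = b.1 ∧ a.2 ≤ b.2)

/-- a nearest-neighbour edge of `ℤ²`, recorded with lexicographically ordered endpoints -/
def IsEdge (e : Z2 × Z2) : Prop := Adj e.1 e.2 ∧ lexLt e.1 e.2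

instance (e : Z2 × Z2) : Decidable (IsEdge e) := by unfold IsEdge; infer_instance

abbrev Edge := {e : Z2 × Z2 // IsEdge e}

/-- a configuration: an assignment of open/closed to every edge of `ℤ²` -/
abbrev Config := Edge → Bool

/-- the edge between the adjacent sites `a` and `b` is open -/
def EOpen (ω : Config) (a b : Z2) : Prop :=
  (∃ h : IsEdge (a, b), ω ⟨(a, b), h⟩ = true) ∨ ∃ h : IsEdge (b, a), ω ⟨(b, a), h⟩ = true

/-- `x ↔ y` : `x` and `y` are joined by a path of open edges -/
def Conn (ω : Config) (x y : Z2) : Prop := Relation.ReflTransGen (EOpen ω) x y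

/-- the edge between `a` and `b` is open and contained (as a subset of `ℝ²`) in `A` -/
def EOpenIn (ω : Config) (A : Set E2) (a b : Z2) : Prop :=
  EOpen ω a b ∧ segment ℝ (toE2 a) (toE2 b) ⊆ A

/-- `x ↔^A y` : `x` and `y` are joined by a path of open edges contained in `A` -/
def ConnIn (ω : Config) (A : Set E2) (x y : Z2) : Prop :=
  Relation.ReflTransGen (EOpenIn ω A) x y

/-! ## Circuits -/

/-- a cycle in `ℤ²` that visits no vertex twice -/
structure Circuit where
  len : ℕ
  four_le : 4 ≤ len
  f : ZMod len → Z2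
  inj : Function.Injective f
  adj : ∀ i, Adj (f i) (f (i + 1))

/-- the closed subset of `ℝ²` formed by the unit edges of the cycle -/
def Circuit.carrier (Γ : Circuit) : Set E2 :=
  ⋃ i, segment ℝ (toE2 (Γ.f i)) (toE2 (Γ.f (i + 1)))

/-- all edges of the circuit are open -/
def Circuit.IsOpenCir (Γ : Circuit) (ω : Config) : Prop := ∀ i, EOpen ω (Γ.f i) (Γ.f (i + 1))

/-- `INT S`: the union of the bounded connected components of `ℝ² ∖ S`
(for a circuit, the bounded connected component of the complement) -/
def INT (S : Set E2) : Set E2 :=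
  {x | x ∉ S ∧ Bornology.IsBounded (connectedComponentIn Sᶜ x)}

/-- planar Lebesgue measure, as a real number -/
def vol (S : Set E2) : ℝ := (volume S).toReal

def IsCircuit (S : Set E2) : Prop := ∃ Γ : Circuit, Γ.carrier = S

/-- `S` is the carrier of an open circuit -/
def IsOpenCircuit (ω : Config) (S : Set E2) : Prop := ∃ Γ : Circuit, Γ.carrier = S ∧ Γ.IsOpenCir ω

/-- an outermost open circuit -/
def IsOutermost (ω : Config) (S : Set E2) : Prop :=
  IsOpenCircuit ω S ∧ ∀ S', IsOpenCircuit ω S' → INT S ⊆ INT S' → S' = S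

/-- `Γ₀`: the unique outermost open circuit that surrounds the origin when exactly one
such circuit exists, and `∅` otherwise -/
def Gamma0 (ω : Config) : Set E2 :=
  if h : ∃! S : Set E2, IsOutermost ω S ∧ (0 : E2) ∈ INT S then h.exists.choose else ∅

/-- `V(Γ) = Γ ∩ ℤ²` -/
def VSet (S : Set E2) : Set E2 := S ∩ Set.range toE2

/-- the boundary of the convex hull of `V(Γ)` -/
def hullB (S : Set E2) : Set E2 := frontier (convexHull ℝ (VSet S))

/-- maximum local roughness -/
def MLR (S : Set E2) : ℝ := sSup ((fun x => infDist x (hullB S)) '' VSet S)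

/-- maximum facet length -/
def MFL (S : Set E2) : ℝ :=
  sSup {r : ℝ | ∃ x y : E2, r = dist x y ∧ segment ℝ x y ⊆ hullB S}

/-- conditional probability `P(A ∣ B)` -/
def cP (P : Measure Config) (A B : Set Config) : ℝ := (P (A ∩ B)).toReal / (P B).toReal

/-! ## The random cluster measure -/

/-- the edges with both endpoints in `Λ` -/
def edgesIn (Λ : Finset Z2) : Finset (Z2 × Z2) := (Λ ×ˢ Λ).filter IsEdge

/-- a configuration on the edges within `Λ` -/
abbrev LConfig (Λ : Finset Z2) := {e // e ∈ edgesIn Λ} → Bool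

def locOpen (Λ : Finset Z2) (η : LConfig Λ) (a b : Z2) : Prop :=
  (∃ h : (a, b) ∈ edgesIn Λ, η ⟨(a, b), h⟩ = true) ∨ ∃ h : (b, a) ∈ edgesIn Λ, η ⟨(b, a), h⟩ = true

/-- `k(η)`: the number of connected components of the graph on `Λ` whose edge set is the
set of `η`-open edges within `Λ` -/
def kComp (Λ : Finset Z2) (η : LConfig Λ) : ℕ :=
  Set.ncard {C : Set Z2 | ∃ a ∈ Λ, C = {b | b ∈ Λ ∧ Relation.ReflTransGen (locOpen Λ η) a b}}

/-- the random-cluster weight `p^{#open} (1-p)^{#closed} q^{k(η)}` -/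
def rcWeight (p q : ℝ) (Λ : Finset Z2) (η : LConfig Λ) : ℝ :=
  p ^ (Finset.univ.filter fun e => η e = true).card *
    (1 - p) ^ (Finset.univ.filter fun e => η e = false).card * q ^ kComp Λ η

/-- the free random cluster probability on `Λ` of a set of local configurations -/
def rcProb (p q : ℝ) (Λ : Finset Z2) (S : Set (LConfig Λ)) : ℝ :=
  (∑ η : LConfig Λ, if η ∈ S then rcWeight p q Λ η else 0) / ∑ η : LConfig Λ, rcWeight p q Λ η

/-- the box `Λ_N = {-N, …, N}²` -/
def box (N : ℕ) : Finset Z2 := Finset.Icc (-(N : ℤ)) (N : ℤ) ×ˢ Finset.Icc (-(N : ℤ)) (N : ℤ)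

/-- the hypotheses on the subcritical random-cluster measure `P` with parameters `p, q`:
(i) finite-volume free random-cluster measures on the boxes `Λ_N` converge to `P` on
cylinder events; (ii) exponential decay of connectivity. -/
def IsSubcriticalRC (p q : ℝ) (P : Measure Config) : Prop :=
  (∀ (F : Finset Edge) (ζ : Edge → Bool),
      Tendsto
        (fun N : ℕ => rcProb p q (box N)
          {η | ∀ e ∈ F, ∀ h : (e : Z2 × Z2) ∈ edgesIn (box N), η ⟨(e : Z2 × Z2), h⟩ = ζ e})
        atTop (𝓝 ((P {ω | ∀ e ∈ F, ω e = ζ e}).toReal))) ∧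
  ∃ c C : ℝ, 0 < c ∧ 0 < C ∧ ∀ N : ℕ,
    (P {ω | ∃ x : Z2, x ∉ box N ∧ Conn ω 0 x}).toReal ≤ C * Real.exp (-c * N)

/-! ## The Wulff shape, global distortion, centring and the event `AREA` -/

/-- the Wulff shape `λ • ⋂_{u ∈ S¹} {t : ⟨t,u⟩ ≤ ξ(u)}` -/
def wulff (ξ : E2 → ℝ) (lam : ℝ) : Set E2 :=
  lam • ⋂ u ∈ sphere (0 : E2) 1, {t : E2 | (inner ℝ t u : ℝ) ≤ ξ u}

/-- the Hausdorff distance of `S` from the translate by `z` of `n ∂𝒲` -/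
def gdVal (ξ : E2 → ℝ) (lam : ℝ) (n : ℕ) (z : Z2) (S : Set E2) : ℝ :=
  hausdorffDist ((fun y => y + toE2 z) '' ((n : ℝ) • frontier (wulff ξ lam))) S

/-- global distortion -/
def GD (ξ : E2 → ℝ) (lam : ℝ) (n : ℕ) (S : Set E2) : ℝ := ⨅ z : Z2, gdVal ξ lam n z S

/-- `z` is the lexicographically minimal minimiser in the definition of `GD` -/
def IsCen (ξ : E2 → ℝ) (lam : ℝ) (n : ℕ) (S : Set E2) (z : Z2) : Prop :=
  gdVal ξ lam n z S = GD ξ lam n S ∧ ∀ z', gdVal ξ lam n z' S = GD ξ lam n S → lexLe z z'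

/-- the centre of a circuit -/
def cen (ξ : E2 → ℝ) (lam : ℝ) (n : ℕ) (S : Set E2) : Z2 :=
  if h : ∃ z, IsCen ξ lam n S z then h.choose else 0

/-- the event `AREA_{0,A} = {|INT(Γ₀)| ≥ A} ∩ {cen(Γ₀) = 0}` (centring at scale `n`) -/
def AREA (ξ : E2 → ℝ) (lam : ℝ) (n : ℕ) (A : ℝ) : Set Config :=
  {ω | A ≤ vol (INT (Gamma0 ω)) ∧ cen ξ lam n (Gamma0 ω) = 0}

/-- the hypotheses on the inverse correlation length `ξ` and the Wulff normalisation `lam` -/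
def WulffHyp (P : Measure Config) (ξ : E2 → ℝ) (lam : ℝ) : Prop :=
  (∀ x : E2,
      Tendsto (fun k : ℕ => -((k : ℝ)⁻¹) * Real.log ((P {ω | Conn ω 0 (fl ((k : ℝ) • x))}).toReal))
        atTop (𝓝 (ξ x))) ∧
    0 < lam ∧ volume (wulff ξ lam) = 1

/-! ## Angles, cones and sectors -/

/-- the angle between two vectors of `ℝ²` -/
def ang (u w : E2) : ℝ := InnerProductGeometry.angle u w

/-- rotation by `π/2` counterclockwise -/
def perp (v : E2) : E2 := mk2 (-(v 1)) (v 0)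

/-- the forward cone `C^F_{π/2 - q₀}(v)` -/
def coneF (q₀ : ℝ) (v : E2) : Set E2 := insert v {w | ang (w - v) (perp v) ≤ Real.pi / 2 - q₀}

/-- the backward cone `C^B_{π/2 - q₀}(v)` -/
def coneB (q₀ : ℝ) (v : E2) : Set E2 := insert v {w | ang (w - v) (-perp v) ≤ Real.pi / 2 - q₀}

/-- the cone `W_{v,c}` with apex `0` about the direction of `v`, of half-aperture `c` -/
def coneDir (v : E2) (c : ℝ) : Set E2 := insert 0 {z | z ≠ 0 ∧ ang z v ≤ c}

/-- the argument of a point of the plane -/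
def argOf (z : E2) : ℝ := Complex.arg ⟨z 0, z 1⟩

/-- reduction modulo `2π` to `[0, 2π)` -/
def mod2pi (t : ℝ) : ℝ := t - 2 * Real.pi * ⌊t / (2 * Real.pi)⌋

/-- the unit vector of argument `θ` -/
def dirE (θ : ℝ) : E2 := mk2 (Real.cos θ) (Real.sin θ)

/-- the closed angular sector `A_{x,y}` with apex `0` swept counterclockwise from the ray
through `x` to the ray through `y` -/
def sector (x y : E2) : Set E2 :=
  insert 0 {z | ∃ r s : ℝ, 0 < r ∧ 0 ≤ s ∧ s ≤ mod2pi (argOf y - argOf x) ∧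
    z = r • dirE (argOf x + s)}

/-! ## Open clusters, open paths, good area capture -/

/-- the open cluster of `x`, as the union of the closed open edges of its component -/
def cluster (ω : Config) (x : Z2) : Set E2 :=
  ⋃ (a : Z2) (b : Z2) (_ : Conn ω x a ∧ EOpen ω a b), segment ℝ (toE2 a) (toE2 b)

/-- the open cluster of `x` within the region `A` -/
def clusterIn (ω : Config) (A : Set E2) (x : Z2) : Set E2 :=
  ⋃ (a : Z2) (b : Z2) (_ : ConnIn ω A x a ∧ EOpenIn ω A a b), segment ℝ (toE2 a) (toE2 b)

/-- the common open cluster `γ'_{x,y}` of `x` and `y` -/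
def cluster2 (ω : Config) (x y : Z2) : Set E2 := cluster ω x ∩ cluster ω y

/-- `fluc_{x,y}(S)`: the maximal distance of a point of `S` from the segment `[x,y]` -/
def fluc (x y : Z2) (S : Set E2) : ℝ :=
  sSup ((fun z => infDist z (segment ℝ (toE2 x) (toE2 y))) '' S)

/-- `S` is (the carrier of) an open path from `x` to `y` contained in `A` -/
def IsOpenPathIn (ω : Config) (A : Set E2) (x y : Z2) (S : Set E2) : Prop :=
  ∃ l : List Z2, l.Nodup ∧ l.head? = some x ∧ l.getLast? = some y ∧
    List.Chain' (EOpenIn ω A) l ∧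
    S = ⋃ p ∈ l.zip l.tail, segment ℝ (toE2 p.1) (toE2 p.2)

/-- the union of the bounded connected components of `A ∖ S` -/
def boundedCompIn (A S : Set E2) : Set E2 :=
  {z | z ∈ A \ S ∧ Bornology.IsBounded (connectedComponentIn (A \ S) z)}

/-- the event `GAC(x,y,ε)` of `ε`-good area capture in the sector `A_{x,y}` -/
def GAC (q₀ : ℝ) (ω : Config) (x y : Z2) (ε : ℝ) : Prop :=
  ConnIn ω (sector (toE2 x) (toE2 y)) x y ∧
  clusterIn ω (sector (toE2 x) (toE2 y)) x ⊆
    coneF (q₀ / 2) (toE2 x) ∩ coneB (q₀ / 2) (toE2 y) ∧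
  ∃ S : Set E2,
    (IsOpenPathIn ω (sector (toE2 x) (toE2 y)) x y S ∧
      ∀ S', IsOpenPathIn ω (sector (toE2 x) (toE2 y)) x y S' →
        boundedCompIn (sector (toE2 x) (toE2 y)) S ⊆
          boundedCompIn (sector (toE2 x) (toE2 y)) S' → S' = S) ∧
    diam S ≤ 2 * dist (toE2 x) (toE2 y) ∧
    vol (convexHull ℝ {0, toE2 x, toE2 y}) +
        ε * dist (toE2 x) (toE2 y) ^ (3 / 2 : ℝ) *
          Real.log (dist (toE2 x) (toE2 y)) ^ (1 / 2 : ℝ) ≤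
      vol (boundedCompIn (sector (toE2 x) (toE2 y)) S)

/-- the edge `e`, as a closed unit segment of `ℝ²` -/
def edgeSeg (e : Edge) : Set E2 := segment ℝ (toE2 (e : Z2 × Z2).1) (toE2 (e : Z2 × Z2).2)

/-! ## Mixing properties -/

/-- the σ-algebra `σ_A` generated by the edge variables in `A` -/
def sigmaOn (A : Set Edge) : MeasurableSpace Config :=
  MeasurableSpace.comap (fun (ω : Config) (e : A) => ω (e : Edge)) inferInstance

/-- `V(A)`: the endpoints of the edges of `A` -/
def VE (A : Set Edge) : Set Z2 := {v | ∃ e ∈ A, (e : Z2 × Z2).1 = v ∨ (e : Z2 × Z2).2 = v}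

/-- the ratio-weak-mixing property with constants `Cr, lam` -/
def RWM (Cr lam : ℝ) (P : Measure Config) : Prop :=
  ∀ 𝒟 ℱ : Set Edge,
    Cr * ∑' (x : VE 𝒟) (y : VE ℱ), Real.exp (-lam * dist (toE2 (x : Z2)) (toE2 (y : Z2))) < 1 →
    ∀ D F : Set Config, MeasurableSet[sigmaOn 𝒟] D → MeasurableSet[sigmaOn ℱ] F →
      0 < (P D).toReal * (P F).toReal →
      |(P (D ∩ F)).toReal / ((P D).toReal * (P F).toReal) - 1| ≤
        Cr * ∑' (x : VE 𝒟) (y : VE ℱ), Real.exp (-lam * dist (toE2 (x : Z2)) (toE2 (y : Z2)))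

/-- the bounded energy property with constant `cbe` -/
def BddEnergy (cbe : ℝ) (P : Measure Config) : Prop :=
  ∀ (e : Edge) (F : Set Config), MeasurableSet[sigmaOn {e}ᶜ] F →
    cbe * (P F).toReal ≤ (P (F ∩ {ω | ω e = true})).toReal ∧
      (P (F ∩ {ω | ω e = true})).toReal ≤ (1 - cbe) * (P F).toReal

/-- `κ_m(A,B)` -/
def kappa (lam m : ℝ) (A B : Set Edge) : ℝ :=
  ∑' (x : VE A) (y : VE B),
    if m ≤ dist (toE2 (x : Z2)) (toE2 (y : Z2)) then
      Real.exp (-lam * dist (toE2 (x : Z2)) (toE2 (y : Z2))) else 0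

/-- `φ_m(A,B)`: the number of pairs of edges of `A × B` within distance `m` of each other -/
def phiCount (m : ℝ) (A B : Set Edge) : ℕ∞ :=
  {ab : Edge × Edge | ab.1 ∈ A ∧ ab.2 ∈ B ∧
    ∃ u ∈ edgeSeg ab.1, ∃ v ∈ edgeSeg ab.2, dist u v ≤ m}.encard

/-- `A` and `B` are `(m₀, C₂)`-well separated -/
def WellSep (Cr lam : ℝ) (m₀ C₂ : ℕ) (A B : Set Edge) : Prop :=
  A ∩ B = ∅ ∧ kappa lam m₀ A B ≤ 1 / (2 * Cr) ∧ phiCount (m₀ : ℝ) A B ≤ (C₂ : ℕ∞)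

/-! ## Regeneration sites -/

/-- the set of `Γ`-regeneration sites -/
def RG (q₀ c₀ : ℝ) (Γ : Set E2) : Set Z2 :=
  {v | toE2 v ∈ Γ ∧ Γ ∩ coneDir (toE2 v) c₀ ⊆ coneF q₀ (toE2 v) ∪ coneB q₀ (toE2 v)}

/-- `θ_RG^MAX(Γ)`: the maximal angle of a sector rooted at the origin free of regeneration
sites -/
def thetaRGMax (q₀ c₀ : ℝ) (Γ : Set E2) : ℝ :=
  sSup {r : ℝ | r ∈ Set.Icc 0 (2 * Real.pi) ∧
    ∃ a : E2, ‖a‖ = 1 ∧ coneDir a (r / 2) ∩ (toE2 '' RG q₀ c₀ Γ) = ∅}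

/-- the counterclockwise angular displacement from `x` to `u` -/
def ccwDisp (x u : E2) : ℝ := mod2pi (argOf u - argOf x)

/-- `u` is a regeneration site first encountered in a counterclockwise (or clockwise) angular
search about the origin beginning at `x` -/
def IsFirstRG (q₀ c₀ : ℝ) (Γ : Set E2) (x u : Z2) : Prop :=
  u ∈ RG q₀ c₀ Γ ∧
    ((∀ w ∈ RG q₀ c₀ Γ, ccwDisp (toE2 x) (toE2 u) ≤ ccwDisp (toE2 x) (toE2 w)) ∨
      ∀ w ∈ RG q₀ c₀ Γ, ccwDisp (toE2 u) (toE2 x) ≤ ccwDisp (toE2 w) (toE2 x))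

/-- the maximum point-to-regeneration-site distance -/
def MPRG (q₀ c₀ : ℝ) (Γ : Set E2) : ℝ :=
  sSup {d : ℝ | ∃ x : Z2, toE2 x ∈ Γ ∧
    ∃ u : Z2, IsFirstRG q₀ c₀ Γ x u ∧ d = dist (toE2 x) (toE2 u)}

/-! ## Translation of configurations -/

/-- the translate of the edge `e` by `v` -/
def shiftE (v : Z2) (e : Edge) : Edge :=
  ⟨((e.1.1.1 + v.1, e.1.1.2 + v.2), (e.1.2.1 + v.1, e.1.2.2 + v.2)), by
    obtain ⟨h1, h2⟩ := e.2
    unfold IsEdge Adj lexLt at *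
    exact ⟨by simp only at h1 ⊢; omega, by simp only at h2 ⊢; omega⟩⟩

/-- the shifted configuration `ω_v(e) = ω(e + v)` -/
def shiftC (v : Z2) (ω : Config) : Config := fun e => ω (shiftE v e)

lemma ang_nonneg (u w : E2) : 0 ≤ ang u w := InnerProductGeometry.angle_nonneg u w

lemma ang_le_pi (u w : E2) : ang u w ≤ Real.pi := InnerProductGeometry.angle_le_pi u w

lemma ang_comm (u w : E2) : ang u w = ang w u := InnerProductGeometry.angle_comm u w

@[simp] lemma perp_apply_zero (v : E2) : perp v 0 = -v 1 := rfl

@[simp] lemma perp_apply_one (v : E2) : perp v 1 = v 0 := rfl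

@[simp] lemma dirE_apply_zero (φ : ℝ) : dirE φ 0 = Real.cos φ := rfl

@[simp] lemma dirE_apply_one (φ : ℝ) : dirE φ 1 = Real.sin φ := rfl

lemma inner_eq_coords (z w : E2) : ⟪z, w⟫ = z 0 * w 0 + z 1 * w 1 := by
  simp [PiLp.inner_apply, Fin.sum_univ_two, mul_comm]

lemma norm_sq_eq_coords (z : E2) : ‖z‖ ^ 2 = z 0 ^ 2 + z 1 ^ 2 := by
  simp [EuclideanSpace.norm_sq_eq, Fin.sum_univ_two]

lemma inner_perp_self (v : E2) : ⟪v, perp v⟫ = 0 := by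
  rw [inner_eq_coords, perp_apply_zero, perp_apply_one]; ring

lemma norm_perp (v : E2) : ‖perp v‖ = ‖v‖ := by
  have h : ‖perp v‖ ^ 2 = ‖v‖ ^ 2 := by
    rw [norm_sq_eq_coords, norm_sq_eq_coords, perp_apply_zero, perp_apply_one]; ring
  exact (pow_left_inj₀ (norm_nonneg _) (norm_nonneg _) two_ne_zero).1 h

lemma inner_sq_add_inner_perp_sq (w v : E2) :
    ⟪w, v⟫ ^ 2 + ⟪w, perp v⟫ ^ 2 = (‖w‖ * ‖v‖) ^ 2 := by
  rw [inner_eq_coords, inner_eq_coords, mul_pow, norm_sq_eq_coords, norm_sq_eq_coords,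
    perp_apply_zero, perp_apply_one]
  ring

lemma norm_toComplex (z : E2) : ‖(⟨z 0, z 1⟩ : ℂ)‖ = ‖z‖ := by
  rw [Complex.norm_def, Complex.normSq_apply, EuclideanSpace.norm_eq]
  simp [Fin.sum_univ_two, sq]

lemma coord_zero_eq (z : E2) : z 0 = ‖z‖ * Real.cos (argOf z) := by
  rw [argOf, ← norm_toComplex, Complex.norm_mul_cos_arg]

lemma coord_one_eq (z : E2) : z 1 = ‖z‖ * Real.sin (argOf z) := by
  rw [argOf, ← norm_toComplex, Complex.norm_mul_sin_arg]

lemma inner_eq_norm_mul_norm_mul_cos_argOf_sub (z w : E2) :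
    ⟪z, w⟫ = ‖z‖ * ‖w‖ * Real.cos (argOf z - argOf w) := by
  rw [inner_eq_coords, coord_zero_eq z, coord_one_eq z, coord_zero_eq w, coord_one_eq w,
    Real.cos_sub]
  ring

lemma inner_dirE (φ : ℝ) (w : E2) : ⟪dirE φ, w⟫ = ‖w‖ * Real.cos (φ - argOf w) := by
  rw [inner_eq_coords, dirE_apply_zero, dirE_apply_one, coord_zero_eq w, coord_one_eq w,
    Real.cos_sub]
  ring

lemma norm_dirE (φ : ℝ) : ‖dirE φ‖ = 1 := by
  simp [EuclideanSpace.norm_eq, Fin.sum_univ_two]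

lemma cos_ang_eq_cos_argOf_sub {z w : E2} (hz : z ≠ 0) (hw : w ≠ 0) :
    Real.cos (ang z w) = Real.cos (argOf z - argOf w) := by
  rw [ang, InnerProductGeometry.cos_angle, inner_eq_norm_mul_norm_mul_cos_argOf_sub]
  field_simp [norm_ne_zero_iff.2 hz, norm_ne_zero_iff.2 hw]

lemma cos_ang_dirE (φ : ℝ) {w : E2} (hw : w ≠ 0) :
    Real.cos (ang (dirE φ) w) = Real.cos (φ - argOf w) := by
  rw [ang, InnerProductGeometry.cos_angle, inner_dirE, norm_dirE]
  field_simp [norm_ne_zero_iff.2 hw]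

lemma ang_le_of_cos_le {u w : E2} {d : ℝ} (hd₀ : 0 ≤ d) (hdπ : d ≤ Real.pi)
    (h : Real.cos d ≤ Real.cos (ang u w)) : ang u w ≤ d :=
  (Real.strictAntiOn_cos.le_iff_ge ⟨hd₀, hdπ⟩
    ⟨ang_nonneg u w, ang_le_pi u w⟩).1 h

lemma mod2pi_eq (t : ℝ) : mod2pi t = 2 * Real.pi * Int.fract (t / (2 * Real.pi)) := by
  rw [mod2pi, Int.fract, mul_sub, mul_div_cancel₀ _ Real.two_pi_pos.ne']

lemma mod2pi_nonneg (t : ℝ) : 0 ≤ mod2pi t := by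
  rw [mod2pi_eq]; exact mul_nonneg Real.two_pi_pos.le (Int.fract_nonneg _)

lemma cos_mod2pi_add (t c : ℝ) : Real.cos (mod2pi t + c) = Real.cos (t + c) := by
  rw [mod2pi, show t - 2 * Real.pi * ⌊t / (2 * Real.pi)⌋ + c
    = t + c - ⌊t / (2 * Real.pi)⌋ * (2 * Real.pi) by ring, Real.cos_sub_int_mul_two_pi]

lemma mod2pi_add_mod2pi_neg_le (t : ℝ) : mod2pi t + mod2pi (-t) ≤ 2 * Real.pi := by
  have h := Int.fract_add_fract_le (t / (2 * Real.pi)) (-(t / (2 * Real.pi)))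
  rw [add_neg_cancel, Int.fract_zero, zero_add] at h
  rw [mod2pi_eq, mod2pi_eq, neg_div, ← mul_add]
  nlinarith [Real.two_pi_pos]

lemma ccwDisp_nonneg (x u : E2) : 0 ≤ ccwDisp x u := mod2pi_nonneg _

lemma ccwDisp_add_ccwDisp_le (x u : E2) : ccwDisp x u + ccwDisp u x ≤ 2 * Real.pi := by
  simpa only [ccwDisp, neg_sub] using mod2pi_add_mod2pi_neg_le (argOf u - argOf x)

lemma cos_argOf_add_sub_argOf (x w : E2) (a : ℝ) :
    Real.cos (argOf x + a - argOf w) = Real.cos (ccwDisp x w - a) := by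
  rw [ccwDisp, sub_eq_add_neg _ a, cos_mod2pi_add, ← Real.cos_neg]
  ring_nf

lemma cos_argOf_add_sub_argOf' (x w : E2) (a : ℝ) :
    Real.cos (argOf x + a - argOf w) = Real.cos (ccwDisp w x + a) := by
  rw [ccwDisp, cos_mod2pi_add]
  ring_nf

lemma ang_le_ccwDisp {x u : E2} (hx : x ≠ 0) (hu : u ≠ 0) : ang x u ≤ ccwDisp x u := by
  by_cases hπ : ccwDisp x u ≤ Real.pi
  · refine ang_le_of_cos_le (ccwDisp_nonneg x u) hπ (le_of_eq ?_)
    rw [cos_ang_eq_cos_argOf_sub hx hu, ← add_zero (argOf x), cos_argOf_add_sub_argOf, sub_zero]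
  · exact (ang_le_pi x u).trans (not_le.1 hπ).le

lemma ang_smul_dirE_le_of_cos_le {w : E2} (hw : w ≠ 0) {t φ d : ℝ} (ht : 0 < t) (hd₀ : 0 ≤ d)
    (hdπ : d ≤ Real.pi) (h : Real.cos d ≤ Real.cos (φ - argOf w)) : ang (t • dirE φ) w ≤ d := by
  rw [ang, InnerProductGeometry.angle_smul_left_of_pos _ _ ht]
  exact ang_le_of_cos_le hd₀ hdπ ((cos_ang_dirE φ hw).symm ▸ h)

lemma norm_mul_norm_mul_sin_le_inner {u w : E2} {q : ℝ} (hq : 0 ≤ q)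
    (h : ang u w ≤ Real.pi / 2 - q) : ‖u‖ * ‖w‖ * Real.sin q ≤ ⟪u, w⟫ := by
  have hcos : Real.sin q ≤ Real.cos (ang u w) := by
    rw [← Real.cos_pi_div_two_sub]
    exact Real.cos_le_cos_of_nonneg_of_le_pi (ang_nonneg u w)
      (by linarith [Real.pi_pos]) h
  rw [← InnerProductGeometry.cos_angle_mul_norm_mul_norm, mul_comm]
  exact mul_le_mul_of_nonneg_right hcos (by positivity)

lemma norm_mul_norm_mul_sin_le_abs_inner_perp {q : ℝ} {v p : E2} (hq : 0 ≤ q)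
    (hp : p ∈ coneF q v ∪ coneB q v) : ‖p - v‖ * ‖v‖ * Real.sin q ≤ |⟪p - v, perp v⟫| := by
  rcases hp with (rfl | hF) | (rfl | hB)
  · simp
  · have := norm_mul_norm_mul_sin_le_inner hq hF
    rw [norm_perp] at this
    exact this.trans (le_abs_self _)
  · simp
  · have := norm_mul_norm_mul_sin_le_inner hq hB
    rw [norm_neg, norm_perp, inner_neg_right] at this
    exact this.trans (neg_le_abs _)

lemma sin_ang_mul_norm_mul_norm (p v : E2) :
    Real.sin (ang p v) * (‖p‖ * ‖v‖) = |⟪p, perp v⟫| := by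
  have h := inner_sq_add_inner_perp_sq p v
  rw [ang, InnerProductGeometry.sin_angle_mul_norm_mul_norm, real_inner_self_eq_norm_sq,
    real_inner_self_eq_norm_sq, ← Real.sqrt_sq_eq_abs]
  congr 1
  linear_combination -h

lemma norm_sub_mul_sin_le_of_mem_cone {q : ℝ} {v p : E2} (hq : 0 ≤ q) (hv : v ≠ 0)
    (hp : p ∈ coneF q v ∪ coneB q v) : ‖p - v‖ * Real.sin q ≤ ‖p‖ * Real.sin (ang p v) := by
  have hkey := norm_mul_norm_mul_sin_le_abs_inner_perp hq hp
  rw [inner_sub_left, inner_perp_self, sub_zero, ← sin_ang_mul_norm_mul_norm] at hkey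
  have hv' : 0 < ‖v‖ := norm_pos_iff.2 hv
  nlinarith

lemma abs_inner_sub_le_of_mem_cone {q : ℝ} {v p : E2} (hq : 0 ≤ q) (hq' : q ≤ Real.pi / 2)
    (hp : p ∈ coneF q v ∪ coneB q v) : |⟪p - v, v⟫| ≤ ‖p - v‖ * ‖v‖ * Real.cos q := by
  have hsin : 0 ≤ Real.sin q := Real.sin_nonneg_of_nonneg_of_le_pi hq (by linarith [Real.pi_pos])
  have hkey := pow_le_pow_left₀ (by positivity) (norm_mul_norm_mul_sin_le_abs_inner_perp hq hp) 2
  rw [sq_abs] at hkey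
  have hcos : 0 ≤ Real.cos q := Real.cos_nonneg_of_mem_Icc ⟨by linarith [Real.pi_pos], hq'⟩
  refine abs_le_of_sq_le_sq ?_ (by positivity)
  nlinarith [inner_sq_add_inner_perp_sq (p - v) v, Real.sin_sq_add_cos_sq q]

lemma abs_norm_sub_norm_le_of_mem_cone {q : ℝ} {v p : E2} (hq : 0 ≤ q) (hq' : q ≤ Real.pi / 2)
    (hv : v ≠ 0) (hp : p ∈ coneF q v ∪ coneB q v) :
    |‖p‖ - ‖v‖| ≤ ‖p - v‖ * Real.cos q + ‖p‖ * (1 - Real.cos (ang p v)) := by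
  have hv' : 0 < ‖v‖ := norm_pos_iff.2 hv
  have hid : (‖p‖ - ‖v‖) * ‖v‖ = ⟪p - v, v⟫ + ‖p‖ * ‖v‖ * (1 - Real.cos (ang p v)) := by
    rw [inner_sub_left, real_inner_self_eq_norm_sq, ang,
      ← InnerProductGeometry.cos_angle_mul_norm_mul_norm]
    ring
  have hcos : 0 ≤ 1 - Real.cos (ang p v) := sub_nonneg.2 (Real.cos_le_one _)
  have h := abs_add_le ⟪p - v, v⟫ (‖p‖ * ‖v‖ * (1 - Real.cos (ang p v)))
  rw [← hid, abs_mul, abs_of_pos hv', abs_of_nonneg (mul_nonneg (by positivity) hcos)] at h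
  have := abs_inner_sub_le_of_mem_cone hq hq' hp
  refine le_of_mul_le_mul_right ?_ hv'
  nlinarith

lemma norm_sub_le_of_mem_cone {q R : ℝ} {v p : E2} (hq : 0 < q) (hq' : q < Real.pi)
    (hv : v ≠ 0) (hp : p ∈ coneF q v ∪ coneB q v) (hpR : ‖p‖ ≤ R) :
    ‖p - v‖ ≤ R * ang p v / Real.sin q := by
  have hang : 0 ≤ ang p v := ang_nonneg p v
  rw [le_div_iff₀ (Real.sin_pos_of_pos_of_lt_pi hq hq')]
  calc ‖p - v‖ * Real.sin q ≤ ‖p‖ * Real.sin (ang p v) :=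
        norm_sub_mul_sin_le_of_mem_cone hq.le hv hp
    _ ≤ R * ang p v :=
        mul_le_mul hpR (Real.sin_le hang)
          (Real.sin_nonneg_of_nonneg_of_le_pi hang (ang_le_pi p v))
          ((norm_nonneg p).trans hpR)

lemma abs_norm_sub_norm_le_of_mem_cone_of_norm_le {q R β : ℝ} {v p : E2} (hq : 0 < q)
    (hq' : q ≤ Real.pi / 2) (hv : v ≠ 0) (hp : p ∈ coneF q v ∪ coneB q v) (hpR : ‖p‖ ≤ R)
    (hβ : ang p v ≤ β) : |‖p‖ - ‖v‖| ≤ R * (β * Real.cot q + β ^ 2 / 2) := by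
  have hang : 0 ≤ ang p v := ang_nonneg p v
  have hR : 0 ≤ R := (norm_nonneg p).trans hpR
  have hcos : 0 ≤ Real.cos q := Real.cos_nonneg_of_mem_Icc ⟨by linarith [Real.pi_pos], hq'⟩
  have hsin : 0 < Real.sin q := Real.sin_pos_of_pos_of_lt_pi hq (by linarith [Real.pi_pos])
  have hchord : ‖p - v‖ * Real.cos q ≤ R * β * Real.cot q := by
    rw [Real.cot_eq_cos_div_sin, ← mul_div_assoc, le_div_iff₀ hsin]
    have := norm_sub_le_of_mem_cone hq (by linarith [Real.pi_pos]) hv hp hpR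
    rw [le_div_iff₀ hsin] at this
    nlinarith [mul_le_mul_of_nonneg_left hβ hR]
  have hvers : ‖p‖ * (1 - Real.cos (ang p v)) ≤ R * (β ^ 2 / 2) := by
    refine mul_le_mul hpR ?_ (sub_nonneg.2 (Real.cos_le_one _)) hR
    nlinarith [Real.one_sub_sq_div_two_le_cos (x := ang p v), pow_le_pow_left₀ hang hβ 2]
  linarith [abs_norm_sub_norm_le_of_mem_cone hq.le hq' hv hp]

lemma cot_add_le_cot_half {q : ℝ} (hq : 0 < q) (hq' : q ≤ Real.pi / 2) :
    3 / 2 * Real.cot q + 3 / 8 * q ≤ Real.cot (q / 2) := by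
  set t := q / 2
  have hq2t : q = 2 * t := by ring
  have ht : 0 < t := by positivity
  have ht' : t ≤ 0.79 := by linarith [Real.pi_lt_d2]
  have hs : 0 < Real.sin t := Real.sin_pos_of_pos_of_lt_pi ht (by linarith [Real.pi_gt_three])
  have hc : 0 < Real.cos t := Real.cos_pos_of_mem_Ioo ⟨by linarith, by linarith [Real.pi_gt_three]⟩
  have hsin : Real.sin q = 2 * Real.sin t * Real.cos t := by rw [hq2t, Real.sin_two_mul]
  have hcos : Real.cos q = 1 - 2 * Real.sin t ^ 2 := by
    rw [hq2t, Real.cos_two_mul, Real.cos_sq']; ring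
  have hsq : 0 < Real.sin q := by rw [hsin]; positivity
  have hlhs : 3 / 2 * Real.cot q + 3 / 8 * q
      = (3 / 2 * Real.cos q + 3 / 8 * q * Real.sin q) / Real.sin q := by
    rw [Real.cot_eq_cos_div_sin]; field_simp
  have hrhs : Real.cot t = 2 * Real.cos t ^ 2 / Real.sin q := by
    rw [Real.cot_eq_cos_div_sin, hsin]; field_simp
  rw [hlhs, hrhs]
  refine div_le_div_of_nonneg_right ?_ hsq.le
  rw [hsin, hcos, hq2t]
  -- with `s = sin t` this is `(3/2) t s cos t ≤ 1/2 + s²`; by AM-GM `(3/2) t s ≤ s² + (9/16) t²`,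
  -- and `(9/16) t² ≤ 1/2` since `t ≤ π/4`
  nlinarith [sq_nonneg (Real.sin t - 3 / 4 * t), Real.sin_le ht.le, Real.cos_le_one t,
    Real.sin_sq_add_cos_sq t, mul_pos ht hs]

open InnerProductGeometry in
lemma norm_sub_le_of_abs_norm_sub_norm_le {X A : E2} {R θ s : ℝ} (hX : ‖X‖ ≤ R) (hA : ‖A‖ ≤ R)
    (hθ : ang X A ≤ θ) (hs : 0 < Real.sin s) (hrad : |‖X‖ - ‖A‖| ≤ R * θ * Real.cot s) :
    ‖X - A‖ ≤ R * θ / Real.sin s := by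
  have hang : 0 ≤ ang X A := ang_nonneg X A
  have hR : 0 ≤ R := (norm_nonneg X).trans hX
  have hlaw : ‖X - A‖ ^ 2 = (‖X‖ - ‖A‖) ^ 2 + 2 * (‖X‖ * ‖A‖) * (1 - Real.cos (ang X A)) := by
    have := norm_sub_sq_eq_norm_sq_add_norm_sq_sub_two_mul_norm_mul_norm_mul_cos_angle X A
    rw [ang]
    linear_combination this
  have hrad2 : (‖X‖ - ‖A‖) ^ 2 ≤ (R * θ * Real.cot s) ^ 2 := by
    rw [← sq_abs]; exact pow_le_pow_left₀ (abs_nonneg _) hrad 2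
  have hvers : 2 * (‖X‖ * ‖A‖) * (1 - Real.cos (ang X A)) ≤ 2 * R ^ 2 * (θ ^ 2 / 2) := by
    have hXA : ‖X‖ * ‖A‖ ≤ R ^ 2 := by nlinarith [norm_nonneg X, norm_nonneg A]
    refine mul_le_mul (by linarith) ?_ (sub_nonneg.2 (Real.cos_le_one _)) (by positivity)
    nlinarith [Real.one_sub_sq_div_two_le_cos (x := ang X A), pow_le_pow_left₀ hang hθ 2]
  have hcsc : (R * θ * Real.cot s) ^ 2 + 2 * R ^ 2 * (θ ^ 2 / 2) = (R * θ / Real.sin s) ^ 2 := by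
    rw [Real.cot_eq_cos_div_sin]
    field_simp
    linear_combination R ^ 2 * θ ^ 2 * Real.sin_sq_add_cos_sq s
  have := abs_le_of_sq_le_sq (a := ‖X - A‖) (by linarith)
    (div_nonneg (mul_nonneg hR (hang.trans hθ)) hs.le)
  rwa [abs_norm] at this

lemma norm_sub_le_of_between_regeneration_sites {q₀ c₀ θ R : ℝ} {S : Set E2} {A B X z : E2}
    (hq₀ : 0 < q₀) (hq₀' : q₀ ≤ Real.pi / 2)
    (hc₀ : c₀ ≤ q₀ / 2) (hθ : θ ≤ 2 * c₀) (hSR : ∀ p ∈ S, ‖p‖ ≤ R) (h0S : (0 : E2) ∉ S)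
    (hA : A ∈ S) (hB : B ∈ S) (hAreg : S ∩ coneDir A c₀ ⊆ coneF q₀ A ∪ coneB q₀ A)
    (hBreg : S ∩ coneDir B c₀ ⊆ coneF q₀ B ∪ coneB q₀ B) (hX : X ∈ S) (hz : z ∈ S)
    {da db : ℝ} (hXA : ang X A ≤ da) (hXB : ang X B ≤ db) (hsum : da + db ≤ θ)
    (hzA : ang z A ≤ θ / 2) (hzB : ang z B ≤ θ / 2) :
    ‖X - A‖ ≤ R * θ / Real.sin (q₀ / 2) := by
  have hpi := Real.pi_pos
  have hne : ∀ p ∈ S, p ≠ 0 := fun p hp h => h0S (h ▸ hp)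
  have hcone : ∀ {v p : E2}, S ∩ coneDir v c₀ ⊆ coneF q₀ v ∪ coneB q₀ v → p ∈ S →
      ang p v ≤ c₀ → p ∈ coneF q₀ v ∪ coneB q₀ v :=
    fun hreg hp h => hreg ⟨hp, Or.inr ⟨hne _ hp, h⟩⟩
  have hda : 0 ≤ da := (ang_nonneg X A).trans hXA
  have hdb : 0 ≤ db := (ang_nonneg X B).trans hXB
  have hsin : 0 < Real.sin (q₀ / 2) := Real.sin_pos_of_pos_of_lt_pi (by linarith) (by linarith)
  have hR : 0 ≤ R := (norm_nonneg X).trans (hSR X hX)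
  have hθ₀ : 0 ≤ θ := by linarith
  by_cases hnear : da ≤ c₀
  · calc ‖X - A‖ ≤ R * ang X A / Real.sin q₀ :=
          norm_sub_le_of_mem_cone hq₀ (by linarith) (hne A hA)
            (hcone hAreg hX (hXA.trans hnear)) (hSR X hX)
      _ ≤ R * θ / Real.sin (q₀ / 2) :=
          div_le_div₀ (by positivity) (mul_le_mul_of_nonneg_left (by linarith) hR) hsin
            (Real.sin_le_sin_of_le_of_le_pi_div_two (by linarith) hq₀' (by linarith))
  · have hXB' : ang X B ≤ θ / 2 := by linarith
    have hrad : ∀ {v p : E2}, v ∈ S → S ∩ coneDir v c₀ ⊆ coneF q₀ v ∪ coneB q₀ v → p ∈ S →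
        ang p v ≤ θ / 2 → |‖p‖ - ‖v‖| ≤ R * (θ / 2 * Real.cot q₀ + (θ / 2) ^ 2 / 2) :=
      fun hv hreg hp h => abs_norm_sub_norm_le_of_mem_cone_of_norm_le hq₀ hq₀' (hne _ hv)
        (hcone hreg hp (by linarith)) (hSR _ hp) h
    have h₁ := hrad hB hBreg hX hXB'
    have h₂ := hrad hB hBreg hz hzB
    have h₃ := hrad hA hAreg hz hzA
    have hcot := cot_add_le_cot_half hq₀ hq₀'
    refine norm_sub_le_of_abs_norm_sub_norm_le (hSR X hX) (hSR A hA) (by linarith) hsin ?_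
    calc |‖X‖ - ‖A‖| ≤ |‖X‖ - ‖B‖| + |‖z‖ - ‖B‖| + |‖z‖ - ‖A‖| := by
          rw [abs_sub_comm ‖z‖ ‖B‖]
          linarith [abs_sub_le ‖X‖ ‖B‖ ‖A‖, abs_sub_le ‖B‖ ‖z‖ ‖A‖]
      _ ≤ R * (θ * (3 / 2 * Real.cot q₀ + 3 / 8 * θ)) := by linarith
      _ ≤ R * θ * Real.cot (q₀ / 2) := by
          rw [mul_assoc]
          gcongr
          linarith

lemma cos_le_cos_of_le_of_le_two_pi_sub {h l : ℝ} (h₀ : 0 ≤ h) (hl : h ≤ l)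
    (hl' : l ≤ 2 * Real.pi - h) : Real.cos l ≤ Real.cos h := by
  rcases le_total l Real.pi with hlπ | hlπ
  · exact Real.cos_le_cos_of_nonneg_of_le_pi h₀ hlπ hl
  · rw [← Real.cos_two_pi_sub l]
    exact Real.cos_le_cos_of_nonneg_of_le_pi h₀ (by linarith) (by linarith)

lemma lt_ang_dirE_of_lt_add {x w : E2} (hw : w ≠ 0) {δ₁ δ₂ r : ℝ} (h₁ : δ₁ ≤ ccwDisp x w)
    (h₂ : δ₂ ≤ ccwDisp w x) (hr₀ : 0 ≤ r) (hr : r < δ₁ + δ₂) :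
    r / 2 < ang (dirE (argOf x + (δ₁ - δ₂) / 2)) w := by
  have hsum := ccwDisp_add_ccwDisp_le x w
  have hcos : Real.cos (ang (dirE (argOf x + (δ₁ - δ₂) / 2)) w)
      ≤ Real.cos ((δ₁ + δ₂) / 2) := by
    rw [cos_ang_dirE _ hw, cos_argOf_add_sub_argOf]
    exact cos_le_cos_of_le_of_le_two_pi_sub (by linarith) (by linarith) (by linarith)
  by_contra! hle
  have hlt : Real.cos ((δ₁ + δ₂) / 2) < Real.cos (r / 2) :=
    Real.cos_lt_cos_of_nonneg_of_le_pi (by linarith) (by linarith) (by linarith)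
  linarith [Real.cos_le_cos_of_nonneg_of_le_pi (ang_nonneg _ w) (by linarith : r / 2 ≤ Real.pi) hle]

section ThetaRGMax

variable {q₀ c₀ : ℝ} {S : Set E2}

lemma le_thetaRGMax {r : ℝ} {a : E2} (hr : r ∈ Set.Icc 0 (2 * Real.pi)) (ha : ‖a‖ = 1)
    (hfree : coneDir a (r / 2) ∩ (toE2 '' RG q₀ c₀ S) = ∅) : r ≤ thetaRGMax q₀ c₀ S :=
  le_csSup ⟨2 * Real.pi, fun _ hr => hr.1.2⟩ ⟨hr, a, ha, hfree⟩

lemma thetaRGMax_nonneg : 0 ≤ thetaRGMax q₀ c₀ S :=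
  Real.sSup_nonneg fun _ hr => hr.1.1

lemma RG_nonempty_of_thetaRGMax_lt (h : thetaRGMax q₀ c₀ S < 2 * Real.pi) :
    (RG q₀ c₀ S).Nonempty := by
  rw [Set.nonempty_iff_ne_empty]
  intro hempty
  refine h.not_ge (le_thetaRGMax ⟨Real.two_pi_pos.le, le_rfl⟩ (norm_dirE 0) ?_)
  simp [hempty]

lemma ccwDisp_add_ccwDisp_le_thetaRGMax (h0S : (0 : E2) ∉ S) {x : E2} {P Q : Z2}
    (hP : P ∈ RG q₀ c₀ S) (hPmin : ∀ w ∈ RG q₀ c₀ S, ccwDisp x (toE2 P) ≤ ccwDisp x (toE2 w))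
    (hQmin : ∀ w ∈ RG q₀ c₀ S, ccwDisp (toE2 Q) x ≤ ccwDisp (toE2 w) x) :
    ccwDisp x (toE2 P) + ccwDisp (toE2 Q) x ≤ thetaRGMax q₀ c₀ S := by
  set δ₁ := ccwDisp x (toE2 P)
  set δ₂ := ccwDisp (toE2 Q) x
  have hσ : δ₁ + δ₂ ≤ 2 * Real.pi := by
    linarith [hQmin P hP, ccwDisp_add_ccwDisp_le x (toE2 P)]
  have hθ : 0 ≤ thetaRGMax q₀ c₀ S := thetaRGMax_nonneg
  by_contra! hlt
  -- the sector of aperture `r ∈ (θ_RG^MAX, δ₁ + δ₂)` bisecting the gap misses `RG`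
  set r := (thetaRGMax q₀ c₀ S + (δ₁ + δ₂)) / 2 with hr
  refine (show thetaRGMax q₀ c₀ S < r by linarith).not_ge
    (le_thetaRGMax ⟨by linarith, by linarith⟩ (norm_dirE (argOf x + (δ₁ - δ₂) / 2)) ?_)
  rw [Set.eq_empty_iff_forall_notMem]
  rintro _ ⟨hcone, w, hw, rfl⟩
  have hw0 : toE2 w ≠ 0 := fun h => h0S (h ▸ hw.1)
  rcases hcone with h | ⟨-, hang⟩
  · exact hw0 h
  · rw [ang_comm] at hang
    exact hang.not_gt (lt_ang_dirE_of_lt_add hw0 (hPmin w hw) (hQmin w hw) (by linarith)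
      (by linarith))

end ThetaRGMax

lemma Circuit.isBounded_carrier (Γ : Circuit) : Bornology.IsBounded Γ.carrier := by
  have : NeZero Γ.len := ⟨by have := Γ.four_le; omega⟩
  exact Bornology.isBounded_iUnion.2 fun _ =>
    Metric.isBounded_closedBall.subset (segment_subset_closedBall_left _ _)

lemma Circuit.carrier_nonempty (Γ : Circuit) : Γ.carrier.Nonempty := by
  have : NeZero Γ.len := ⟨by have := Γ.four_le; omega⟩
  exact ⟨_, Set.mem_iUnion.2 ⟨0, left_mem_segment ℝ _ _⟩⟩

lemma norm_le_sSup_norm {S : Set E2} (hS : Bornology.IsBounded S) {p : E2} (hp : p ∈ S) :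
    ‖p‖ ≤ sSup ((fun z : E2 => ‖z‖) '' S) := by
  obtain ⟨C, hC⟩ := hS.exists_norm_le
  exact le_csSup ⟨C, by rintro _ ⟨z, hz, rfl⟩; exact hC z hz⟩ ⟨p, hp, rfl⟩

lemma exists_smul_dirE_mem_of_mem_INT {S : Set E2} (h0 : (0 : E2) ∈ INT S) (φ : ℝ) :
    ∃ t : ℝ, 0 < t ∧ t • dirE φ ∈ S := by
  by_contra! hmiss
  -- otherwise the whole ray lies in the bounded component of `Sᶜ` containing `0`
  have hray : (fun t : ℝ => t • dirE φ) '' Set.Ici 0 ⊆ connectedComponentIn Sᶜ 0 := by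
    refine (isPreconnected_Ici.image _ (by fun_prop)).subset_connectedComponentIn
      ⟨0, Set.self_mem_Ici, zero_smul ℝ _⟩ ?_
    rintro _ ⟨t, ht, rfl⟩
    rcases (Set.mem_Ici.1 ht).eq_or_lt with rfl | htpos
    · simpa using h0.1
    · exact hmiss t htpos
  obtain ⟨C, hC⟩ := (h0.2.subset hray).exists_norm_le
  have := hC _ ⟨max C 0 + 1, by simp only [Set.mem_Ici]; positivity, rfl⟩
  rw [norm_smul, norm_dirE, mul_one, Real.norm_of_nonneg (by positivity)] at this
  linarith [le_max_left C 0]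

lemma RG_finite {q₀ c₀ : ℝ} {S : Set E2} (hS : Bornology.IsBounded S) :
    (RG q₀ c₀ S).Finite := by
  obtain ⟨C, hC⟩ := hS.exists_norm_le
  refine (isCompact_closedBall (0 : Z2) C).finite_of_discrete.subset fun v hv => ?_
  have hv := hC _ hv.1
  rw [Metric.mem_closedBall, dist_zero_right, Prod.norm_def, ← Int.norm_cast_real,
    ← Int.norm_cast_real]
  exact max_le ((PiLp.norm_apply_le (toE2 v) 0).trans hv) ((PiLp.norm_apply_le (toE2 v) 1).trans hv)

lemma dist_le_of_first_regeneration_sites {q₀ c₀ R : ℝ} {S : Set E2} (hq₀ : 0 < q₀)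
    (hq₀' : q₀ ≤ Real.pi / 2) (hc₀ : c₀ ≤ q₀ / 2) (h0 : (0 : E2) ∈ INT S)
    (hSR : ∀ p ∈ S, ‖p‖ ≤ R) (hθ : thetaRGMax q₀ c₀ S ≤ 2 * c₀) {x P Q : Z2}
    (hx : toE2 x ∈ S) (hP : P ∈ RG q₀ c₀ S) (hQ : Q ∈ RG q₀ c₀ S)
    (hPmin : ∀ w ∈ RG q₀ c₀ S, ccwDisp (toE2 x) (toE2 P) ≤ ccwDisp (toE2 x) (toE2 w))
    (hQmin : ∀ w ∈ RG q₀ c₀ S, ccwDisp (toE2 Q) (toE2 x) ≤ ccwDisp (toE2 w) (toE2 x)) :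
    dist (toE2 x) (toE2 P) ≤ R * (Real.sin (q₀ / 2))⁻¹ * thetaRGMax q₀ c₀ S ∧
      dist (toE2 x) (toE2 Q) ≤ R * (Real.sin (q₀ / 2))⁻¹ * thetaRGMax q₀ c₀ S := by
  have hne : ∀ p ∈ S, p ≠ 0 := fun p hp h => h0.1 (h ▸ hp)
  set θ := thetaRGMax q₀ c₀ S
  set δ₁ := ccwDisp (toE2 x) (toE2 P)
  set δ₂ := ccwDisp (toE2 Q) (toE2 x)
  have hδ₁ : 0 ≤ δ₁ := ccwDisp_nonneg _ _
  have hδ₂ : 0 ≤ δ₂ := ccwDisp_nonneg _ _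
  have hgap : δ₁ + δ₂ ≤ θ := ccwDisp_add_ccwDisp_le_thetaRGMax h0.1 hP hPmin hQmin
  have hcos : Real.cos (θ / 2) ≤ Real.cos ((δ₁ + δ₂) / 2) :=
    Real.cos_le_cos_of_nonneg_of_le_pi (by linarith) (by linarith [Real.pi_pos]) (by linarith)
  -- `z` is a point of `S` on the bisector of the gap from `Q` to `P`
  obtain ⟨t, ht, hz⟩ := exists_smul_dirE_mem_of_mem_INT h0 (argOf (toE2 x) + (δ₁ - δ₂) / 2)
  have hθ₀ : 0 ≤ θ / 2 := by linarith
  have hθπ : θ / 2 ≤ Real.pi := by linarith [Real.pi_pos]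
  have hzP := ang_smul_dirE_le_of_cos_le (hne _ hP.1) ht hθ₀ hθπ
    (by rwa [cos_argOf_add_sub_argOf, show δ₁ - (δ₁ - δ₂) / 2 = (δ₁ + δ₂) / 2 by ring])
  have hzQ := ang_smul_dirE_le_of_cos_le (hne _ hQ.1) ht hθ₀ hθπ
    (by rwa [cos_argOf_add_sub_argOf', show δ₂ + (δ₁ - δ₂) / 2 = (δ₁ + δ₂) / 2 by ring])
  have hxP : ang (toE2 x) (toE2 P) ≤ δ₁ := ang_le_ccwDisp (hne _ hx) (hne _ hP.1)
  have hxQ : ang (toE2 x) (toE2 Q) ≤ δ₂ := ang_comm (toE2 x) (toE2 Q) ▸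
    ang_le_ccwDisp (hne _ hQ.1) (hne _ hx)
  rw [dist_eq_norm, dist_eq_norm, mul_right_comm, ← div_eq_mul_inv]
  exact ⟨norm_sub_le_of_between_regeneration_sites hq₀ hq₀' hc₀ hθ hSR h0.1 hP.1 hQ.1 hP.2 hQ.2
      hx hz hxP hxQ hgap hzP hzQ,
    norm_sub_le_of_between_regeneration_sites hq₀ hq₀' hc₀ hθ hSR h0.1 hQ.1 hP.1 hQ.2 hP.2
      hx hz hxQ hxP (by linarith) hzQ hzP⟩

/-- **Point-to-regeneration-site distance.** For a circuit `Γ` around the origin with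
`R = sup {‖z‖ : z ∈ Γ}`, if `θ_RG^MAX(Γ) ≤ 2 c₀` then `RG(Γ) ≠ ∅` and
`MPRG(Γ) ≤ R csc(q₀/2) θ_RG^MAX(Γ)`. -/
theorem mprg_le (q₀ c₀ : ℝ) (hq : q₀ ∈ Set.Ioo 0 (Real.pi / 2))
    (hc : c₀ ∈ Set.Ioc 0 (q₀ / 2)) (Γ : Circuit) (h0 : (0 : E2) ∈ INT Γ.carrier)
    (R : ℝ) (hR : R = sSup ((fun z : E2 => ‖z‖) '' Γ.carrier))
    (hθ : thetaRGMax q₀ c₀ Γ.carrier ≤ 2 * c₀) :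
    (RG q₀ c₀ Γ.carrier).Nonempty ∧
      MPRG q₀ c₀ Γ.carrier ≤ R * (Real.sin (q₀ / 2))⁻¹ * thetaRGMax q₀ c₀ Γ.carrier := by
  obtain ⟨hq₀, hq₀'⟩ := hq
  have hRG : (RG q₀ c₀ Γ.carrier).Nonempty :=
    RG_nonempty_of_thetaRGMax_lt (by linarith [hc.2, Real.pi_pos])
  have hSR : ∀ p ∈ Γ.carrier, ‖p‖ ≤ R := fun p hp => hR ▸ norm_le_sSup_norm Γ.isBounded_carrier hp
  have hfin : (RG q₀ c₀ Γ.carrier).Finite := RG_finite Γ.isBounded_carrier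
  refine ⟨hRG, Real.sSup_le ?_ ?_⟩
  · rintro _ ⟨x, hx, u, ⟨hu, hccw | hcw⟩, rfl⟩
    · obtain ⟨Q, hQ, hQmin⟩ :=
        Set.exists_min_image _ (fun w => ccwDisp (toE2 w) (toE2 x)) hfin hRG
      exact (dist_le_of_first_regeneration_sites hq₀ hq₀'.le hc.2 h0 hSR hθ hx hu hQ hccw
        hQmin).1
    · obtain ⟨P, hP, hPmin⟩ :=
        Set.exists_min_image _ (fun w => ccwDisp (toE2 x) (toE2 w)) hfin hRG
      exact (dist_le_of_first_regeneration_sites hq₀ hq₀'.le hc.2 h0 hSR hθ hx hP hu hPmin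
        hcw).2
  · have hR₀ : 0 ≤ R := (norm_nonneg _).trans (hSR _ Γ.carrier_nonempty.some_mem)
    have hsin : 0 < Real.sin (q₀ / 2) :=
      Real.sin_pos_of_pos_of_lt_pi (by linarith) (by linarith [Real.pi_pos])
    have hθ₀ : 0 ≤ thetaRGMax q₀ c₀ Γ.carrier := thetaRGMax_nonneg
    positivity
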